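/- arXiv:1108.5104 — 3 statements merged into one kernel-verified Lean document; each statement's English description precedes it below -/
import Mathlib

section
/- Let C be a nonempty (n,d,w) constant-weight code with d even and d < 2w ≤ n, with distance distribution {A_{2i}}, and let H = {d/2, …, w}. Suppose i ≠ j are in H with m_{i,j} = d. Let P_i, P_j, P_{ij}, P_{ji} be positive integers with P_i ≥ T(i,w,i,n−w,d), P_j ≥ T(j,w,j,n−w,d), P_{ji} ≥ T(w1,n1,w2,n2,d) and P_{ij} ≥ T(w1',n1',w2',n2',d), where w1 = |i+j−w|, n1 = i if w < i+j and n1 = w−i otherwise, w2 = |i+j−(n−w)|, n2 = i if n−w < i+j and n2 = (n−w)−i otherwise, and w1', n1', w2', n2' are defined the same way with the roles of i and j interchanged. Then: (1) if P_{ij}/P_i + P_{ji}/P_j ≥ 1, then ((P_j − P_{ji})/(P_j·P_{ij}))·A_{2i} + (1/P_j)·A_{2j} ≤ 1; (2) if P_{ij}/P_i + P_{ji}/P_j ≥ 1, then (1/P_i)·A_{2i} + ((P_i − P_{ij})/(P_i·P_{ji}))·A_{2j} ≤ 1; (3) if P_{ij}/P_i + P_{ji}/P_j ≤ 1, then (1/P_i)·A_{2i}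 + (1/P_j)·A_{2j} ≤ 1. -/
/-- The number of ones of a binary vector. -/
def wtOnes {n : ℕ} (u : Fin n → ZMod 2) : ℕ :=
  (Finset.univ.filter (fun t => u t = 1)).card

/-- `C` is an `(n,d,w)` constant-weight binary code. -/
def IsCWCode (n d w : ℕ) (C : Finset (Fin n → ZMod 2)) : Prop :=
  (∀ c ∈ C, wtOnes c = w) ∧
  ∀ u ∈ C, ∀ v ∈ C, u ≠ v → d ≤ hammingDist u v

/-- `A n d w`: the largest possible size of an `(n,d,w)` constant-weight code. -/
noncomputable def A (n d w : ℕ) : ℕ :=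
  sSup {M | ∃ C : Finset (Fin n → ZMod 2), IsCWCode n d w C ∧ C.card = M}

/-- `C` is a `(w1,n1,w2,n2,d)` doubly-constant-weight binary code. -/
def IsDCWCode (w1 n1 w2 n2 d : ℕ) (C : Finset (Fin n1 ⊕ Fin n2 → ZMod 2)) : Prop :=
  (∀ c ∈ C,
    (Finset.univ.filter (fun t : Fin n1 => c (Sum.inl t) = 1)).card = w1 ∧
    (Finset.univ.filter (fun t : Fin n2 => c (Sum.inr t) = 1)).card = w2) ∧
  ∀ u ∈ C, ∀ v ∈ C, u ≠ v → d ≤ hammingDist u v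

/-- `T w1 n1 w2 n2 d`: the largest possible size of a `(w1,n1,w2,n2,d)`
doubly-constant-weight code. -/
noncomputable def T (w1 n1 w2 n2 d : ℕ) : ℕ :=
  sSup {M | ∃ C : Finset (Fin n1 ⊕ Fin n2 → ZMod 2), IsDCWCode w1 n1 w2 n2 d C ∧ C.card = M}

/-- `S_i(c)`: the set of codewords of `C` at distance `i` from `c`. -/
def Sdist {n : ℕ} (C : Finset (Fin n → ZMod 2)) (c : Fin n → ZMod 2) (i : ℕ) :
    Finset (Fin n → ZMod 2) :=
  C.filter (fun u => hammingDist u c = i)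

/-- The distance distribution `A_i = (1/|C|) ∑_{c ∈ C} |S_i(c)|` of a code `C`. -/
noncomputable def distDistr {n : ℕ} (C : Finset (Fin n → ZMod 2)) (i : ℕ) : ℚ :=
  (∑ c ∈ C, ((Sdist C c i).card : ℚ)) / (C.card : ℚ)

/-- `V_i`: vectors of `F^n` with exactly `i` ones on the first `w` coordinates and
exactly `i` ones on the last `n - w` coordinates. -/
def Vset (n w i : ℕ) : Finset (Fin n → ZMod 2) :=
  Finset.univ.filter (fun u =>
    (Finset.univ.filter (fun t : Fin n => t.val < w ∧ u t = 1)).card = i ∧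
    (Finset.univ.filter (fun t : Fin n => w ≤ t.val ∧ u t = 1)).card = i)

/-- `m_{i,j} = max { d(u,v) : u ∈ V_i, v ∈ V_j }`. -/
def mMax (n w i j : ℕ) : ℕ :=
  ((Vset n w i) ×ˢ (Vset n w j)).sup fun p => hammingDist p.1 p.2

/-- `P⁻_k(n;x) = ∑_{j odd} C(x,j) C(n-x,k-j)`. -/
def Pminus (k n x : ℕ) : ℕ :=
  ∑ j ∈ Finset.range (k + 1), if Odd j then x.choose j * (n - x).choose (k - j) else 0

/-- `P⁺_k(n;x) = ∑_{j even} C(x,j) C(n-x,k-j)`. -/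
def Pplus (k n x : ℕ) : ℕ :=
  ∑ j ∈ Finset.range (k + 1), if Even j then x.choose j * (n - x).choose (k - j) else 0

/-- The Krawtchouk polynomial `P_k(n;x) = ∑_j (-1)^j C(x,j) C(n-x,k-j)` at integer points. -/
def Kraw (k n x : ℕ) : ℤ :=
  ∑ j ∈ Finset.range (k + 1), (-1 : ℤ) ^ j * x.choose j * (n - x).choose (k - j)

/-!
For a codeword `c`, a codeword `u` at distance `2k` from `c` differs from `c` in `k` positions
inside the support of `c` and `k` outside it, so the translates `u + c`, `u ∈ S_{2k}(c)`, form a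
`(k, w, k, n - w, d)` doubly-constant-weight code and `|S_{2i}(c)| ≤ T(i, w, i, n - w, d)`.

Testing `m_{i,j}` on vectors whose supports overlap as little as possible shows that
`m_{i,j} = d` forces `w < i + j`, `n - w < i + j` and `2n ≤ d + 2(i + j)`. If moreover some `v`
lies in `S_{2j}(c)`, then for `u ∈ S_{2i}(c)` the supports `X` of `u + c` and `Y` of `v + c`
satisfy `d ≤ |X ∆ Y| = 2|X ∪ Y| - 2i - 2j`, hence `X ∪ Y` is everything. So all of `S_{2i}(c)`
agree off `Y`, and restricting to `Y` gives an `(i + j - w, j, i + j + w - n, j, d)` code.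

Thus `a = |S_{2i}(c)|` and `b = |S_{2j}(c)|` satisfy `a ≤ P_i`, `b ≤ P_j`, `a ≤ P_{ij}` if
`b ≠ 0` and `b ≤ P_{ji}` if `a ≠ 0`. Each of the three inequalities holds for all such pairs,
and averaging over `c ∈ C` turns it into the inequality for `A_{2i}` and `A_{2j}`.
-/

open Finset
open scoped symmDiff

namespace Finset
variable {α : Type*} [DecidableEq α] {s t r : Finset α}

theorem card_symmDiff : #(s ∆ t) = #(s \ t) + #(t \ s) := by
  rw [symmDiff_def, sup_eq_union, card_union_of_disjoint disjoint_sdiff_sdiff]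

theorem card_symmDiff_add_card_add_card : #(s ∆ t) + #s + #t = 2 * #(s ∪ t) := by
  have := card_sdiff_add_card_inter s t
  have := card_union_add_card_inter s t
  have := card_sdiff_add_card_inter t s
  rw [inter_comm] at this
  rw [card_symmDiff]
  omega

theorem card_sdiff_eq_of_card_symmDiff {k : ℕ} (hst : #s = #t) (h : #(s ∆ t) = 2 * k) :
    #(s \ t) = k ∧ #(t \ s) = k := by
  have := card_sdiff_add_card_inter s t
  have := card_sdiff_add_card_inter t s
  rw [inter_comm] at this
  rw [card_symmDiff] at h
  omega

theorem card_inter_inter_add_card (h : r \ t ⊆ s) :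
    #(s ∩ (t ∩ r)) + #r = #(s ∩ r) + #(t ∩ r) := by
  have hsdiff : (s ∩ r) \ t = r \ t := by
    ext x
    simp only [mem_sdiff, mem_inter]
    exact ⟨fun hx => ⟨hx.1.2, hx.2⟩, fun hx => ⟨⟨h (mem_sdiff.2 hx), hx.1⟩, hx.2⟩⟩
  have := card_inter_add_card_sdiff (s ∩ r) t
  have := card_sdiff_add_card_inter r t
  rw [hsdiff, inter_assoc, inter_comm r t] at *
  omega

theorem union_eq_univ_of_card_le [Fintype α] (h : 2 * Fintype.card α ≤ #(s ∆ t) + #s + #t) :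
    s ∪ t = univ :=
  eq_univ_of_card _ <| le_antisymm (card_le_univ _) <| by
    rw [card_symmDiff_add_card_add_card] at h
    omega

theorem exists_subsets_card_union_eq_min (s : Finset α) {i j : ℕ} (hi : i ≤ #s) (hj : j ≤ #s) :
    ∃ a ⊆ s, ∃ b ⊆ s, #a = i ∧ #b = j ∧ #(a ∪ b) = min (i + j) #s := by
  by_cases hij : i + j ≤ #s
  · obtain ⟨b, hbs, rfl⟩ := exists_subset_card_eq hj
    obtain ⟨a, has, rfl⟩ := exists_subset_card_eq (s := s \ b) (n := i)
      (by rw [card_sdiff_of_subset hbs]; omega)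
    refine ⟨a, has.trans sdiff_subset, b, hbs, rfl, rfl, ?_⟩
    rw [card_union_of_disjoint (disjoint_of_subset_left has sdiff_disjoint)]
    omega
  · obtain ⟨a, has, ha⟩ := exists_subset_card_eq hi
    obtain ⟨b, hba, hb⟩ := exists_subset_card_eq (s := a) (n := i + j - #s) (by omega)
    refine ⟨a, has, (s \ a) ∪ b, union_subset sdiff_subset (hba.trans has), ha, ?_, ?_⟩
    · rw [card_union_of_disjoint (disjoint_of_subset_right hba sdiff_disjoint),
        card_sdiff_of_subset has]
      omega
    · rw [← union_assoc, union_sdiff_of_subset has, union_eq_left.2 (hba.trans has)]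
      omega

end Finset

section BinaryVector
variable {ι : Type*} [Fintype ι]

def ones (x : ι → ZMod 2) : Finset ι := {t | x t = 1}

@[simp]
theorem mem_ones {x : ι → ZMod 2} {t : ι} : t ∈ ones x ↔ x t = 1 := by
  simp [ones]

theorem ones_add [DecidableEq ι] (x y : ι → ZMod 2) : ones (x + y) = ones x ∆ ones y := by
  ext t
  simp only [ones, mem_filter, mem_univ, true_and, mem_symmDiff, Pi.add_apply]
  generalize x t = a, y t = b
  revert a b
  decide

theorem hammingDist_eq_card_ones_add (x y : ι → ZMod 2) : hammingDist x y = #(ones (x + y)) := by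
  refine congrArg card (filter_congr fun t _ => ?_)
  simp only [Pi.add_apply]
  generalize x t = a, y t = b
  revert a b
  decide

theorem hammingDist_add_right (x y z : ι → ZMod 2) :
    hammingDist (x + z) (y + z) = hammingDist x y := by
  rw [hammingDist_eq_hammingNorm, hammingDist_eq_hammingNorm]
  congr 1
  abel

theorem ones_indicator [DecidableEq ι] (s : Finset ι) : ones ((s : Set ι).indicator 1) = s := by
  ext t
  by_cases ht : t ∈ s <;> simp [ones, ht]

theorem card_ones_add_inter_eq [DecidableEq ι] {x c : ι → ZMod 2} {k : ℕ}
    (hw : #(ones x) = #(ones c)) (hd : hammingDist x c = 2 * k) :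
    #(ones (x + c) ∩ ones c) = k ∧ #(ones (x + c) ∩ (ones c)ᶜ) = k := by
  rw [hammingDist_eq_card_ones_add, ones_add] at hd
  have hc : ones x ∆ ones c ∩ ones c = ones c \ ones x := by ext; simp [mem_symmDiff]; tauto
  have hx : ones x ∆ ones c ∩ (ones c)ᶜ = ones x \ ones c := by ext; simp [mem_symmDiff]; tauto
  rw [ones_add, hc, hx]
  exact (card_sdiff_eq_of_card_symmDiff hw hd).symm

end BinaryVector

section Restriction
variable {ι κ : Type*} [DecidableEq ι] [Fintype κ]

theorem card_le_T_of_isDCWCode {w1 n1 w2 n2 d : ℕ} {D : Finset (Fin n1 ⊕ Fin n2 → ZMod 2)}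
    (h : IsDCWCode w1 n1 w2 n2 d D) : #D ≤ T w1 n1 w2 n2 d :=
  le_csSup ⟨_, fun _ ⟨E, _, hE⟩ => hE ▸ card_le_univ E⟩ ⟨D, h, rfl⟩

theorem hammingDist_comp_of_injective [Fintype ι] {β : Type*} [DecidableEq β] {e : κ → ι}
    (he : Function.Injective e) {x y : ι → β} (h : ∀ t, x t ≠ y t → t ∈ Set.range e) :
    hammingDist (x ∘ e) (y ∘ e) = hammingDist x y := by
  rw [hammingDist, hammingDist, ← card_image_of_injective _ he]
  congr 1
  ext t
  simp only [mem_image, mem_filter, mem_univ, true_and, Function.comp_apply]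
  constructor
  · rintro ⟨s, hs, rfl⟩
    exact hs
  · intro ht
    obtain ⟨s, rfl⟩ := h t ht
    exact ⟨s, ht, rfl⟩

theorem card_ones_comp_of_injective [Fintype ι] {e : κ → ι} (he : Function.Injective e)
    (x : ι → ZMod 2) :
    #(ones (x ∘ e)) = #(ones x ∩ univ.image e) := by
  rw [← card_image_of_injective _ he]
  congr 1
  ext t
  simp only [ones, mem_image, mem_filter, mem_univ, true_and, mem_inter, Function.comp_apply]
  constructor
  · rintro ⟨s, hs, rfl⟩
    exact ⟨hs, s, rfl⟩
  · rintro ⟨ht, s, rfl⟩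
    exact ⟨s, ht, rfl⟩

theorem image_equivFin_symm (P : Finset ι) :
    univ.image (fun s => (P.equivFin.symm s : ι)) = P := by
  ext t
  simp only [mem_image, mem_univ, true_and]
  exact ⟨fun ⟨s, hs⟩ => hs ▸ (P.equivFin.symm s).2, fun ht => ⟨P.equivFin ⟨t, ht⟩, by simp⟩⟩

theorem exists_injective_sumElim {P Q : Finset ι} (hPQ : Disjoint P Q) :
    ∃ (eP : Fin #P → ι) (eQ : Fin #Q → ι), Function.Injective (Sum.elim eP eQ) ∧
      univ.image eP = P ∧ univ.image eQ = Q := by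
  refine ⟨fun s => P.equivFin.symm s, fun s => Q.equivFin.symm s, ?_,
    image_equivFin_symm P, image_equivFin_symm Q⟩
  refine (Subtype.val_injective.comp P.equivFin.symm.injective).sumElim
    (Subtype.val_injective.comp Q.equivFin.symm.injective)
    fun a b (hab : (P.equivFin.symm a : ι) = Q.equivFin.symm b) => ?_
  exact disjoint_left.1 hPQ (P.equivFin.symm a).2 (hab ▸ (Q.equivFin.symm b).2)

theorem card_le_T_of_eqOn [Fintype ι] {S : Finset (ι → ZMod 2)} (g : ι → ZMod 2)
    {P Q : Finset ι} {w1 w2 d : ℕ} (hPQ : Disjoint P Q)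
    (hS : ∀ x ∈ S, ∀ y ∈ S, ∀ t ∉ P, t ∉ Q → x t = y t)
    (hP : ∀ x ∈ S, #(ones (x + g) ∩ P) = w1) (hQ : ∀ x ∈ S, #(ones (x + g) ∩ Q) = w2)
    (hd : ∀ x ∈ S, ∀ y ∈ S, x ≠ y → d ≤ hammingDist x y) :
    #S ≤ T w1 #P w2 #Q d := by
  obtain ⟨eP, eQ, he, hPim, hQim⟩ := exists_injective_sumElim hPQ
  set r : (ι → ZMod 2) → (Fin #P ⊕ Fin #Q → ZMod 2) := fun x => (x + g) ∘ Sum.elim eP eQ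
  have hr : ∀ x ∈ S, ∀ y ∈ S, hammingDist (r x) (r y) = hammingDist x y := by
    intro x hx y hy
    rw [hammingDist_comp_of_injective he, hammingDist_add_right]
    intro t ht
    by_cases htP : t ∈ P
    · obtain ⟨s, -, rfl⟩ := mem_image.1 (hPim ▸ htP)
      exact ⟨Sum.inl s, rfl⟩
    by_cases htQ : t ∈ Q
    · obtain ⟨s, -, rfl⟩ := mem_image.1 (hQim ▸ htQ)
      exact ⟨Sum.inr s, rfl⟩
    exact absurd (by simp [hS x hx y hy t htP htQ]) ht
  have hrS : Set.InjOn r S := fun x hx y hy hxy =>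
    hammingDist_eq_zero.1 (by rw [← hr x hx y hy, hxy, hammingDist_self])
  rw [← card_image_of_injOn hrS]
  refine card_le_T_of_isDCWCode ⟨fun z hz => ?_, fun z hz z' hz' hzz' => ?_⟩
  · obtain ⟨x, hx, rfl⟩ := mem_image.1 hz
    exact ⟨(card_ones_comp_of_injective (he.comp Sum.inl_injective) (x + g)).trans
        (hPim.symm ▸ hP x hx),
      (card_ones_comp_of_injective (he.comp Sum.inr_injective) (x + g)).trans
        (hQim.symm ▸ hQ x hx)⟩
  · obtain ⟨x, hx, rfl⟩ := mem_image.1 hz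
    obtain ⟨y, hy, rfl⟩ := mem_image.1 hz'
    rw [hr x hx y hy]
    exact hd x hx y hy fun h => hzz' (h ▸ rfl)

end Restriction

section Vset
variable {n w : ℕ}

def firstCoords (n w : ℕ) : Finset (Fin n) := {t | (t : ℕ) < w}

theorem card_firstCoords (hwn : w ≤ n) : #(firstCoords n w) = w := by
  rw [firstCoords, Fin.card_filter_val_lt]
  omega

theorem card_compl_firstCoords (hwn : w ≤ n) : #(firstCoords n w)ᶜ = n - w := by
  rw [card_compl, Fintype.card_fin, card_firstCoords hwn]

theorem mem_Vset_iff {u : Fin n → ZMod 2} {i : ℕ} :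
    u ∈ Vset n w i ↔
      #(ones u ∩ firstCoords n w) = i ∧ #(ones u ∩ (firstCoords n w)ᶜ) = i := by
  simp only [Vset, mem_filter, mem_univ, true_and]
  congr! 3 <;> ext t <;> simp [ones, firstCoords, and_comm]

theorem indicator_union_mem_Vset {a b : Finset (Fin n)} {i : ℕ} (ha : a ⊆ firstCoords n w)
    (hb : b ⊆ (firstCoords n w)ᶜ) (hai : #a = i) (hbi : #b = i) :
    (↑(a ∪ b) : Set (Fin n)).indicator 1 ∈ Vset n w i := by
  rw [mem_Vset_iff, ones_indicator, union_inter_distrib_right, union_inter_distrib_right,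
    inter_eq_left.2 ha, inter_eq_left.2 hb,
    disjoint_iff_inter_eq_empty.1 (disjoint_of_subset_left hb disjoint_compl_left),
    disjoint_iff_inter_eq_empty.1 (disjoint_of_subset_left ha disjoint_compl_right),
    union_empty, empty_union]
  exact ⟨hai, hbi⟩

theorem two_mul_min_add_min_le_mMax {i j : ℕ} (hwn : w ≤ n) (hiw : i ≤ w) (hjw : j ≤ w)
    (hin : i ≤ n - w) (hjn : j ≤ n - w) :
    2 * (min (i + j) w + min (i + j) (n - w)) ≤ mMax n w i j + 2 * (i + j) := by
  set L := firstCoords n w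
  have hL : #L = w := card_firstCoords hwn
  have hLc : #Lᶜ = n - w := card_compl_firstCoords hwn
  obtain ⟨a₁, ha₁, b₁, hb₁, ha₁i, hb₁j, hab₁⟩ :=
    exists_subsets_card_union_eq_min L (hL ▸ hiw) (hL ▸ hjw)
  obtain ⟨a₂, ha₂, b₂, hb₂, ha₂i, hb₂j, hab₂⟩ :=
    exists_subsets_card_union_eq_min Lᶜ (hLc ▸ hin) (hLc ▸ hjn)
  have hle : hammingDist ((↑(a₁ ∪ a₂) : Set (Fin n)).indicator 1)
      ((↑(b₁ ∪ b₂) : Set (Fin n)).indicator 1) ≤ mMax n w i j :=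
    le_sup (f := fun p : (Fin n → ZMod 2) × (Fin n → ZMod 2) => hammingDist p.1 p.2)
      (b := (_, _)) (mem_product.2
      ⟨indicator_union_mem_Vset ha₁ ha₂ ha₁i ha₂i, indicator_union_mem_Vset hb₁ hb₂ hb₁j hb₂j⟩)
  have hdist := card_symmDiff_add_card_add_card (s := a₁ ∪ a₂) (t := b₁ ∪ b₂)
  rw [← ones_indicator (a₁ ∪ a₂), ← ones_indicator (b₁ ∪ b₂), ← ones_add,
    ← hammingDist_eq_card_ones_add, ones_indicator, ones_indicator, union_union_union_comm,
    card_union_of_disjoint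
      (disjoint_compl_right.mono (union_subset ha₁ hb₁) (union_subset ha₂ hb₂)),
    card_union_of_disjoint (disjoint_compl_right.mono ha₁ ha₂),
    card_union_of_disjoint (disjoint_compl_right.mono hb₁ hb₂)] at hdist
  rw [hL] at hab₁
  rw [hLc] at hab₂
  omega

theorem lt_add_of_mMax_eq {d i j : ℕ} (hd : Even d) (hwn : 2 * w ≤ n) (hdi : d / 2 ≤ i)
    (hiw : i ≤ w) (hdj : d / 2 ≤ j) (hjw : j ≤ w) (hij : i ≠ j) (hm : mMax n w i j = d) :
    w < i + j ∧ n < w + (i + j) ∧ 2 * n ≤ d + 2 * (i + j) := by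
  have := two_mul_min_add_min_le_mMax (n := n) (by omega) hiw hjw (by omega) (by omega)
  obtain ⟨e, rfl⟩ := hd
  omega

end Vset

section ConstantWeightCode
variable {n d w : ℕ} {C : Finset (Fin n → ZMod 2)} {c : Fin n → ZMod 2}

theorem mem_Sdist {u : Fin n → ZMod 2} {k : ℕ} :
    u ∈ Sdist C c k ↔ u ∈ C ∧ hammingDist u c = k :=
  mem_filter

theorem IsCWCode.le_hammingDist_of_mem_Sdist (hC : IsCWCode n d w C) {u v : Fin n → ZMod 2}
    {k l : ℕ} (hu : u ∈ Sdist C c k) (hv : v ∈ Sdist C c l) (huv : u ≠ v) :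
    d ≤ hammingDist u v :=
  hC.2 u (mem_Sdist.1 hu).1 v (mem_Sdist.1 hv).1 huv

theorem IsCWCode.card_ones_add_inter_of_mem_Sdist (hC : IsCWCode n d w C) (hc : c ∈ C)
    {u : Fin n → ZMod 2} {k : ℕ} (hu : u ∈ Sdist C c (2 * k)) :
    #(ones (u + c) ∩ ones c) = k ∧ #(ones (u + c) ∩ (ones c)ᶜ) = k :=
  card_ones_add_inter_eq ((hC.1 u (mem_Sdist.1 hu).1).trans (hC.1 c hc).symm) (mem_Sdist.1 hu).2

theorem IsCWCode.card_ones (hC : IsCWCode n d w C) (hc : c ∈ C) : #(ones c) = w :=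
  hC.1 c hc

theorem IsCWCode.card_compl_ones (hC : IsCWCode n d w C) (hc : c ∈ C) :
    #(ones c)ᶜ = n - w := by
  rw [card_compl, Fintype.card_fin, hC.card_ones hc]

theorem IsCWCode.card_Sdist_le_T (hC : IsCWCode n d w C) (hc : c ∈ C) (i : ℕ) :
    #(Sdist C c (2 * i)) ≤ T i w i (n - w) d := by
  have h := card_le_T_of_eqOn (S := Sdist C c (2 * i)) c disjoint_compl_right
    (fun _ _ _ _ t htP htQ => absurd (mem_compl.2 htP) htQ)
    (fun _ hu => (hC.card_ones_add_inter_of_mem_Sdist hc hu).1)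
    (fun _ hu => (hC.card_ones_add_inter_of_mem_Sdist hc hu).2)
    (fun _ hu _ hv => hC.le_hammingDist_of_mem_Sdist hu hv)
  rwa [hC.card_compl_ones hc, hC.card_ones hc] at h

theorem IsCWCode.ones_add_union_eq_univ (hC : IsCWCode n d w C) {i j : ℕ} (hij : i ≠ j)
    (hn : 2 * n ≤ d + 2 * (i + j)) {u v : Fin n → ZMod 2} (hu : u ∈ Sdist C c (2 * i))
    (hv : v ∈ Sdist C c (2 * j)) : ones (u + c) ∪ ones (v + c) = univ := by
  have huv : u ≠ v := by
    rintro rfl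
    have := (mem_Sdist.1 hu).2.symm.trans (mem_Sdist.1 hv).2
    omega
  apply union_eq_univ_of_card_le
  rw [← ones_add, ← hammingDist_eq_card_ones_add, hammingDist_add_right,
    ← hammingDist_eq_card_ones_add, ← hammingDist_eq_card_ones_add, (mem_Sdist.1 hu).2,
    (mem_Sdist.1 hv).2, Fintype.card_fin]
  have := hC.le_hammingDist_of_mem_Sdist hu hv huv
  omega

theorem IsCWCode.card_Sdist_le_T_of_nonempty (hC : IsCWCode n d w C) (hc : c ∈ C)
    {i j w1 w2 : ℕ} (hij : i ≠ j) (hw1 : w1 + w = i + j) (hw2 : w2 + n = i + j + w)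
    (hn : 2 * n ≤ d + 2 * (i + j)) (hne : (Sdist C c (2 * j)).Nonempty) :
    #(Sdist C c (2 * i)) ≤ T w1 j w2 j d := by
  obtain ⟨v, hv⟩ := hne
  obtain ⟨hvA, hvAc⟩ := hC.card_ones_add_inter_of_mem_Sdist hc hv
  have hcover : ∀ u ∈ Sdist C c (2 * i), ∀ t ∉ ones (v + c), t ∈ ones (u + c) := fun u hu t ht =>
    (mem_union.1 (hC.ones_add_union_eq_univ hij hn hu hv ▸ mem_univ t)).resolve_right ht
  have hsplit : ∀ u ∈ Sdist C c (2 * i), ∀ r, #(ones (u + c) ∩ (ones (v + c) ∩ r)) + #r =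
      #(ones (u + c) ∩ r) + #(ones (v + c) ∩ r) := fun u hu _ =>
    card_inter_inter_add_card fun t ht => hcover u hu t (mem_sdiff.1 ht).2
  have hw : w ≤ n := hC.card_ones hc ▸ (card_le_univ (ones c)).trans_eq (Fintype.card_fin n)
  have h := card_le_T_of_eqOn (w1 := w1) (w2 := w2) c
    (P := ones (v + c) ∩ ones c) (Q := ones (v + c) ∩ (ones c)ᶜ)
    (disjoint_compl_right.mono inter_subset_right inter_subset_right)
    (fun u hu u' hu' t htP htQ => by
      have ht : t ∉ ones (v + c) := fun htY => by
        by_cases htA : t ∈ ones c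
        · exact htP (mem_inter.2 ⟨htY, htA⟩)
        · exact htQ (mem_inter.2 ⟨htY, mem_compl.2 htA⟩)
      have h1 := mem_ones.1 (hcover u hu t ht)
      have h2 := mem_ones.1 (hcover u' hu' t ht)
      exact add_right_cancel (h1.trans h2.symm))
    (fun u hu => by
      have := hsplit u hu (ones c)
      have := (hC.card_ones_add_inter_of_mem_Sdist hc hu).1
      have := hC.card_ones hc
      omega)
    (fun u hu => by
      have := hsplit u hu (ones c)ᶜ
      have := (hC.card_ones_add_inter_of_mem_Sdist hc hu).2
      have := hC.card_compl_ones hc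
      omega)
    (fun _ hu _ hv => hC.le_hammingDist_of_mem_Sdist hu hv)
  rwa [hvA, hvAc] at h

end ConstantWeightCode

section Averaging
variable {K : Type*} [Field K] [LinearOrder K] [IsStrictOrderedRing K] {Pi Pj Pij Pji : K}
  {a b : ℕ}

theorem sub_div_mul_add_one_div_mul_le_one (hPi : 0 < Pi) (hPj : 0 < Pj) (hPij : 0 < Pij)
    (ha : (a : K) ≤ Pi) (hb : (b : K) ≤ Pj) (hab : b ≠ 0 → (a : K) ≤ Pij)
    (hba : a ≠ 0 → (b : K) ≤ Pji) (h : 1 ≤ Pij / Pi + Pji / Pj) :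
    (Pj - Pji) / (Pj * Pij) * a + 1 / Pj * b ≤ 1 := by
  have h' : Pi * Pj ≤ Pij * Pj + Pji * Pi := by
    rw [div_add_div _ _ hPi.ne' hPj.ne', one_le_div (by positivity)] at h
    linarith
  suffices (Pj - Pji) * a + Pij * b ≤ Pj * Pij by
    rw [div_mul_eq_mul_div, one_div_mul_eq_div, div_add_div _ _ (by positivity) hPj.ne',
      div_le_one (by positivity)]
    nlinarith
  have ha0 : (0 : K) ≤ a := a.cast_nonneg
  rcases Nat.eq_zero_or_pos b with rfl | hb0
  · rw [Nat.cast_zero, mul_zero, add_zero]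
    rcases le_or_gt Pj Pji with hP | hP
    · nlinarith
    · nlinarith [mul_le_mul_of_nonneg_left ha (sub_pos.2 hP).le]
  rcases Nat.eq_zero_or_pos a with rfl | ha0'
  · rw [Nat.cast_zero, mul_zero, zero_add, mul_comm Pj]
    exact mul_le_mul_of_nonneg_left hb hPij.le
  have haP := hab hb0.ne'
  have hbP := hba ha0'.ne'
  rcases le_or_gt Pji Pj with hP | hP
  · nlinarith [mul_le_mul_of_nonneg_left haP (sub_nonneg.2 hP)]
  · nlinarith

theorem one_div_mul_add_one_div_mul_le_one (hPi : 0 < Pi) (hPj : 0 < Pj) (ha : (a : K) ≤ Pi)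
    (hb : (b : K) ≤ Pj) (hab : b ≠ 0 → (a : K) ≤ Pij) (hba : a ≠ 0 → (b : K) ≤ Pji)
    (h : Pij / Pi + Pji / Pj ≤ 1) :
    1 / Pi * a + 1 / Pj * b ≤ 1 := by
  rw [one_div_mul_eq_div, one_div_mul_eq_div]
  rcases Nat.eq_zero_or_pos b with rfl | hb0
  · simpa using (div_le_one hPi).2 ha
  rcases Nat.eq_zero_or_pos a with rfl | ha0
  · simpa using (div_le_one hPj).2 hb
  calc (a : K) / Pi + b / Pj ≤ Pij / Pi + Pji / Pj := by
        gcongr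
        exacts [hab hb0.ne', hba ha0.ne']
    _ ≤ 1 := h

end Averaging

section DistanceDistribution
variable {n : ℕ} {C : Finset (Fin n → ZMod 2)}

theorem mul_distDistr_add_mul_distDistr_le_one (hC : C.Nonempty) {i j : ℕ} {α β : ℚ}
    (h : ∀ c ∈ C, α * #(Sdist C c i) + β * #(Sdist C c j) ≤ 1) :
    α * distDistr C i + β * distDistr C j ≤ 1 := by
  rw [distDistr, distDistr, mul_div_assoc', mul_div_assoc', ← add_div,
    div_le_one (by exact_mod_cast hC.card_pos), mul_sum, mul_sum, ← sum_add_distrib]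
  simpa using sum_le_card_nsmul C _ 1 h

end DistanceDistribution

theorem distDistr_equality_case_general (n d w i j : ℕ) (C : Finset (Fin n → ZMod 2)) (hC : C.Nonempty)
    (hcode : IsCWCode n d w C) (hd : Even d) (hwn : 2 * w ≤ n)
    (hi : i ∈ Finset.Icc (d / 2) w) (hj : j ∈ Finset.Icc (d / 2) w) (hij : i ≠ j)
    (hm : mMax n w i j = d)
    (Pi Pj Pij Pji : ℤ) (hPi0 : 0 < Pi) (hPj0 : 0 < Pj) (hPij0 : 0 < Pij) (hPji0 : 0 < Pji)
    (hPi : (T i w i (n - w) d : ℤ) ≤ Pi) (hPj : (T j w j (n - w) d : ℤ) ≤ Pj)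
    (hPji : (T (((i : ℤ) + j - (w : ℤ)).natAbs)
        (if w < i + j then i else w - i)
        (((i : ℤ) + j - ((n - w : ℕ) : ℤ)).natAbs)
        (if n - w < i + j then i else (n - w) - i) d : ℤ) ≤ Pji)
    (hPij : (T (((j : ℤ) + i - (w : ℤ)).natAbs)
        (if w < j + i then j else w - j)
        (((j : ℤ) + i - ((n - w : ℕ) : ℤ)).natAbs)
        (if n - w < j + i then j else (n - w) - j) d : ℤ) ≤ Pij) :
    ((1 : ℚ) ≤ (Pij : ℚ) / (Pi : ℚ) + (Pji : ℚ) / (Pj : ℚ) →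
      (((Pj : ℚ) - (Pji : ℚ)) / ((Pj : ℚ) * (Pij : ℚ))) * distDistr C (2 * i) +
        (1 / (Pj : ℚ)) * distDistr C (2 * j) ≤ 1) ∧
    ((1 : ℚ) ≤ (Pij : ℚ) / (Pi : ℚ) + (Pji : ℚ) / (Pj : ℚ) →
      (1 / (Pi : ℚ)) * distDistr C (2 * i) +
        (((Pi : ℚ) - (Pij : ℚ)) / ((Pi : ℚ) * (Pji : ℚ))) * distDistr C (2 * j) ≤ 1) ∧
    ((Pij : ℚ) / (Pi : ℚ) + (Pji : ℚ) / (Pj : ℚ) ≤ 1 →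
      (1 / (Pi : ℚ)) * distDistr C (2 * i) +
        (1 / (Pj : ℚ)) * distDistr C (2 * j) ≤ 1) := by
  obtain ⟨hdi, hiw⟩ := mem_Icc.1 hi
  obtain ⟨hdj, hjw⟩ := mem_Icc.1 hj
  obtain ⟨hwij, hnwij, hdn⟩ := lt_add_of_mMax_eq hd hwn hdi hiw hdj hjw hij hm
  rw [if_pos (by omega), if_pos (by omega)] at hPij hPji
  have cast_le {a b : ℕ} {P : ℤ} (hab : a ≤ b) (hP : (b : ℤ) ≤ P) : (a : ℚ) ≤ P := by
    exact_mod_cast (Nat.cast_le.2 hab).trans hP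
  have hSi c hc := cast_le (hcode.card_Sdist_le_T (c := c) hc i) hPi
  have hSj c hc := cast_le (hcode.card_Sdist_le_T (c := c) hc j) hPj
  have hSij c hc hb := cast_le (hcode.card_Sdist_le_T_of_nonempty (c := c) hc hij (by omega)
    (by omega) (by omega) (card_ne_zero.1 hb)) hPij
  have hSji c hc ha := cast_le (hcode.card_Sdist_le_T_of_nonempty (c := c) hc hij.symm (by omega)
    (by omega) (by omega) (card_ne_zero.1 ha)) hPji
  have qPi : (0 : ℚ) < Pi := Int.cast_pos.2 hPi0
  have qPj : (0 : ℚ) < Pj := Int.cast_pos.2 hPj0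
  have qPij : (0 : ℚ) < Pij := Int.cast_pos.2 hPij0
  have qPji : (0 : ℚ) < Pji := Int.cast_pos.2 hPji0
  refine ⟨fun h => ?_, fun h => ?_, fun h => ?_⟩
  · exact mul_distDistr_add_mul_distDistr_le_one hC fun c hc =>
      sub_div_mul_add_one_div_mul_le_one qPi qPj qPij (hSi c hc) (hSj c hc) (hSij c hc)
        (hSji c hc) h
  · rw [add_comm]
    exact mul_distDistr_add_mul_distDistr_le_one hC fun c hc =>
      sub_div_mul_add_one_div_mul_le_one qPj qPi qPji (hSj c hc) (hSi c hc) (hSji c hc)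
        (hSij c hc) (by linarith)
  · exact mul_distDistr_add_mul_distDistr_le_one hC fun c hc =>
      one_div_mul_add_one_div_mul_le_one qPi qPj (hSi c hc) (hSj c hc) (hSij c hc) (hSji c hc) h

/-- For a nonempty `(n,d,w)` constant-weight code `C` (`d` even,
`d < 2w ≤ n`) with distance distribution `{A_{2i}}`, `i ≠ j` in `H` with
`m_{i,j} = d`, and positive integers `P_i, P_j, P_{ij}, P_{ji}` as described, the
three conditional inequalities hold. -/
theorem distDistr_equality_case (n d w i j : ℕ) (C : Finset (Fin n → ZMod 2)) (hC : C.Nonempty)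
    (hcode : IsCWCode n d w C) (hd : Even d) (hdw : d < 2 * w) (hwn : 2 * w ≤ n)
    (hi : i ∈ Finset.Icc (d / 2) w) (hj : j ∈ Finset.Icc (d / 2) w) (hij : i ≠ j)
    (hm : mMax n w i j = d)
    (Pi Pj Pij Pji : ℤ) (hPi0 : 0 < Pi) (hPj0 : 0 < Pj) (hPij0 : 0 < Pij) (hPji0 : 0 < Pji)
    (hPi : (T i w i (n - w) d : ℤ) ≤ Pi) (hPj : (T j w j (n - w) d : ℤ) ≤ Pj)
    (hPji : (T (((i : ℤ) + j - (w : ℤ)).natAbs)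
        (if w < i + j then i else w - i)
        (((i : ℤ) + j - ((n - w : ℕ) : ℤ)).natAbs)
        (if n - w < i + j then i else (n - w) - i) d : ℤ) ≤ Pji)
    (hPij : (T (((j : ℤ) + i - (w : ℤ)).natAbs)
        (if w < j + i then j else w - j)
        (((j : ℤ) + i - ((n - w : ℕ) : ℤ)).natAbs)
        (if n - w < j + i then j else (n - w) - j) d : ℤ) ≤ Pij) :
    ((1 : ℚ) ≤ (Pij : ℚ) / (Pi : ℚ) + (Pji : ℚ) / (Pj : ℚ) →
      (((Pj : ℚ) - (Pji : ℚ)) / ((Pj : ℚ) * (Pij : ℚ))) * distDistr C (2 * i) +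
        (1 / (Pj : ℚ)) * distDistr C (2 * j) ≤ 1) ∧
    ((1 : ℚ) ≤ (Pij : ℚ) / (Pi : ℚ) + (Pji : ℚ) / (Pj : ℚ) →
      (1 / (Pi : ℚ)) * distDistr C (2 * i) +
        (((Pi : ℚ) - (Pij : ℚ)) / ((Pi : ℚ) * (Pji : ℚ))) * distDistr C (2 * j) ≤ 1) ∧
    ((Pij : ℚ) / (Pi : ℚ) + (Pji : ℚ) / (Pj : ℚ) ≤ 1 →
      (1 / (Pi : ℚ)) * distDistr C (2 * i) +
        (1 / (Pj : ℚ)) * distDistr C (2 * j) ≤ 1) :=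
  distDistr_equality_case_general n d w i j C hC hcode hd hwn hi hj hij hm Pi Pj Pij Pji hPi0 hPj0
    hPij0 hPji0 hPi hPj hPji hPij
end

section
/- (1-row k-column formula) Let C be a nonempty (n,d,w) constant-weight code of size M, viewed as an M × n matrix over F = {0,1} whose rows are the codewords. Then for each k = 1, 2, …, M, Σ_{{u1',…,uk'}} wt(u1' + ⋯ + uk') = M · P_k^−(n; w), where the sum is taken over all k-element sets {u1',…,uk'} of distinct columns of C, the column sum is taken modulo 2 componentwise, and wt denotes the number of ones of a vector in F^M. -/
/-!
Count the pairs (codeword `c`, `k`-set of columns `S`) with `∑_{t ∈ S} c t = 1` row by row.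
If `A` is the support of `c`, that sum is `|S ∩ A| mod 2`, and exactly
`C(|A|, j) C(n - |A|, k - j)` of the `k`-sets meet `A` in `j` points; summing over odd `j`
gives `P⁻_k(n; w)` for every row, since every codeword has weight `w`.
-/

open Finset

namespace Finset

theorem sum_zmod_two_eq_card_filter {ι : Type*} (c : ι → ZMod 2) (S : Finset ι) :
    ∑ t ∈ S, c t = #{t ∈ S | c t = 1} := by
  have hboole : ∀ x : ZMod 2, x = if x = 1 then 1 else 0 := by decide
  rw [sum_congr rfl fun t _ ↦ hboole (c t), sum_boole]

variable {ι : Type*} [Fintype ι] [DecidableEq ι]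

theorem card_powersetCard_filter_card_inter_eq (A : Finset ι) {j k : ℕ} (hj : j ≤ k) :
    #{S ∈ univ.powersetCard k | #(S ∩ A) = j} = (#A).choose j * (#Aᶜ).choose (k - j) := by
  rw [← card_powersetCard, ← card_powersetCard, ← card_product]
  refine card_bij' (fun S _ ↦ (S ∩ A, S \ A)) (fun p _ ↦ p.1 ∪ p.2) ?_ ?_ ?_ ?_
  · intro S hS
    rw [mem_filter, mem_powersetCard] at hS
    simp only [mem_product, mem_powersetCard]
    refine ⟨⟨inter_subset_right, hS.2⟩, fun x hx ↦ mem_compl.mpr (mem_sdiff.mp hx).2, ?_⟩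
    have := card_inter_add_card_sdiff S A
    omega
  · rintro ⟨U, V⟩ hUV
    simp only [mem_product, mem_powersetCard] at hUV
    obtain ⟨⟨hUA, hU⟩, hVA, hV⟩ := hUV
    have hdisj : Disjoint U V := disjoint_of_subset_left hUA (subset_compl_iff_disjoint_left.mp hVA)
    have hinter : (U ∪ V) ∩ A = U := by
      rw [union_inter_distrib_right, inter_eq_left.mpr hUA,
        disjoint_iff_inter_eq_empty.mp (subset_compl_iff_disjoint_right.mp hVA), union_empty]
    rw [mem_filter, mem_powersetCard, card_union_of_disjoint hdisj, hinter]
    exact ⟨⟨subset_univ _, by omega⟩, hU⟩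
  · intro S _
    exact sup_inf_sdiff S A
  · rintro ⟨U, V⟩ hUV
    simp only [mem_product, mem_powersetCard] at hUV
    obtain ⟨⟨hUA, -⟩, hVA, -⟩ := hUV
    ext x <;> simp only [mem_union, mem_inter, mem_sdiff] <;> grind [mem_compl]

theorem card_powersetCard_filter_odd_card_inter (A : Finset ι) (k : ℕ) :
    #{S ∈ univ.powersetCard k | Odd #(S ∩ A)} = Pminus k (Fintype.card ι) #A := by
  have hmaps : ∀ S ∈ univ.powersetCard k, #(S ∩ A) ∈ range (k + 1) := fun S hS ↦
    mem_range_succ_iff.mpr ((mem_powersetCard.mp hS).2 ▸ card_le_card inter_subset_left)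
  rw [card_eq_sum_card_fiberwise fun S hS ↦ hmaps S (mem_filter.mp hS).1, Pminus]
  refine sum_congr rfl fun j hj ↦ ?_
  rw [filter_filter]
  split_ifs with hodd
  · rw [← card_compl, ← card_powersetCard_filter_card_inter_eq A (mem_range_succ_iff.mp hj)]
    congr 1
    exact filter_congr fun S _ ↦ ⟨And.right, fun h ↦ ⟨h ▸ hodd, h⟩⟩
  · exact card_eq_zero.mpr (filter_false_of_mem fun S _ ⟨h, hj⟩ ↦ hodd (hj ▸ h))

theorem card_powersetCard_filter_sum_zmod_two_eq_one (c : ι → ZMod 2) (k : ℕ) :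
    #{S ∈ univ.powersetCard k | ∑ t ∈ S, c t = 1} =
      Pminus k (Fintype.card ι) #{t | c t = 1} := by
  rw [← card_powersetCard_filter_odd_card_inter]
  congr 1
  refine filter_congr fun S _ ↦ ?_
  rw [sum_zmod_two_eq_card_filter, inter_filter, inter_univ, ZMod.natCast_eq_one_iff_odd]

end Finset

theorem one_row_k_column_general (n d w : ℕ) (C : Finset (Fin n → ZMod 2))
    (hcode : IsCWCode n d w C) (k : ℕ) :
    ∑ S ∈ Finset.powersetCard k (Finset.univ : Finset (Fin n)),
        (C.filter (fun c => (∑ t ∈ S, c t) = 1)).card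
      = C.card * Pminus k n w := by
  calc ∑ S ∈ powersetCard k univ, #{c ∈ C | ∑ t ∈ S, c t = 1}
      = ∑ c ∈ C, #{S ∈ powersetCard k univ | ∑ t ∈ S, c t = 1} := by
        simp only [card_filter]
        exact sum_comm
    _ = ∑ _c ∈ C, Pminus k n w := sum_congr rfl fun c hc ↦ by
        rw [card_powersetCard_filter_sum_zmod_two_eq_one, Fintype.card_fin, ← hcode.1 c hc, wtOnes]
    _ = #C * Pminus k n w := by rw [sum_const, smul_eq_mul]

/-- 1-row k-column formula: For a nonempty `(n,d,w)` constant-weight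
code `C` of size `M`, viewed as an `M × n` binary matrix, and each `k = 1, …, M`,
the sum over all `k`-element sets of columns of the weight of their (mod 2) sum
equals `M · P⁻_k(n;w)`. -/
theorem one_row_k_column (n d w : ℕ) (C : Finset (Fin n → ZMod 2)) (hC : C.Nonempty)
    (hcode : IsCWCode n d w C) (k : ℕ) (hk1 : 1 ≤ k) (hk2 : k ≤ C.card) :
    ∑ S ∈ Finset.powersetCard k (Finset.univ : Finset (Fin n)),
        (C.filter (fun c => (∑ t ∈ S, c t) = 1)).card
      = C.card * Pminus k n w :=
  one_row_k_column_general n d w C hcode k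
end

section
/- (Delsarte inequalities for binary codes) Let C be a nonempty subset of F^n of size M whose distinct elements are pairwise at distance at least d, and let {A_i}_{i=0}^{n} be its distance distribution. Then for every k = 0, 1, …, n, Σ_{i=1}^{n} P_k(n;i) · A_i ≥ −C(n,k). Moreover, if M is odd, then Σ_{i=1}^{n} P_k(n;i) · A_i ≥ ((1−M)/M) · C(n,k). -/
/-!
For the Walsh characters `χ_S(u) = (-1)^{|S ∩ supp u|}` one has
`P_k(n; d(u,v)) = ∑_{|S| = k} χ_S(u) χ_S(v)`, because `χ_S(u) χ_S(v) = χ_S(u - v)` and summing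
`(-1)^{|S ∩ E|}` over the `k`-sets `S` counts them by `j = |S ∩ E|`. Hence
`∑_{u,v ∈ C} P_k(n; d(u,v)) = ∑_{|S| = k} (∑_{u ∈ C} χ_S(u))² ≥ 0`, and when `|C|` is odd every
inner sum is a sum of an odd number of `±1`'s, so it is nonzero and the total is at least `C(n,k)`.
Dividing by `|C|` and splitting off the term `i = 0`, where `A_0 = 1` and `P_k(n;0) = C(n,k)`,
gives both inequalities.
-/

open Finset

namespace BinaryCode

section Walsh

variable {α : Type*}

def sign (a : ZMod 2) : ℤ := if a = 0 then 1 else -1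

theorem sign_neg_add (a b : ZMod 2) : sign (-a + b) = sign a * sign b := by
  revert a b; decide

theorem intCast_sign (a : ZMod 2) : (sign a : ZMod 2) = 1 := by
  revert a; decide

def walsh (S : Finset α) (u : α → ZMod 2) : ℤ := ∏ t ∈ S, sign (u t)

theorem walsh_neg_add (S : Finset α) (u v : α → ZMod 2) :
    walsh S (-u + v) = walsh S u * walsh S v := by
  simp only [walsh, ← prod_mul_distrib, Pi.add_apply, Pi.neg_apply, sign_neg_add]

theorem intCast_sum_walsh (S : Finset α) (C : Finset (α → ZMod 2)) :
    ((∑ u ∈ C, walsh S u : ℤ) : ZMod 2) = #C := by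
  simp [walsh, intCast_sign]

theorem one_le_sq_sum_walsh (S : Finset α) {C : Finset (α → ZMod 2)} (hC : Odd #C) :
    1 ≤ (∑ u ∈ C, walsh S u) ^ 2 := by
  have : ∑ u ∈ C, walsh S u ≠ 0 := fun h => by
    simpa [h, ZMod.natCast_eq_one_iff_odd.mpr hC] using intCast_sum_walsh S C
  exact (one_le_sq_iff_one_le_abs _).mpr (Int.one_le_abs this)

end Walsh

section Krawtchouk

variable {α : Type*} [Fintype α] [DecidableEq α]

theorem card_powersetCard_filter_card_inter (E : Finset α) {j k : ℕ} (hjk : j ≤ k) :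
    #{S ∈ powersetCard k univ | #(S ∩ E) = j}
      = (#E).choose j * (Fintype.card α - #E).choose (k - j) := by
  have split {P Q : Finset α} (hP : P ⊆ E) (hQ : Q ⊆ Eᶜ) :
      (P ∪ Q) ∩ E = P ∧ (P ∪ Q) \ E = Q := by
    constructor <;> ext t <;> have := @hP t <;> have := @hQ t <;>
      simp only [mem_inter, mem_union, mem_sdiff, mem_compl] at * <;> tauto
  rw [← card_compl, ← card_powersetCard j E, ← card_powersetCard (k - j) Eᶜ, ← card_product]
  refine card_nbij' (fun S => (S ∩ E, S \ E)) (fun p => p.1 ∪ p.2) ?_ ?_ ?_ ?_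
  · intro S hS
    simp only [mem_coe, mem_filter, mem_powersetCard, subset_univ, true_and] at hS
    obtain ⟨hSk, hSE⟩ := hS
    have := card_inter_add_card_sdiff S E
    simp only [coe_product, Set.mem_prod, mem_coe, mem_powersetCard]
    exact ⟨⟨inter_subset_right, hSE⟩, fun t ht => mem_compl.mpr (mem_sdiff.mp ht).2, by omega⟩
  · rintro ⟨P, Q⟩ hPQ
    simp only [coe_product, Set.mem_prod, mem_coe, mem_powersetCard] at hPQ
    obtain ⟨⟨hPE, hP⟩, hQE, hQ⟩ := hPQ
    obtain ⟨hPQE, hPQE'⟩ := split hPE hQE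
    have := card_inter_add_card_sdiff (P ∪ Q) E
    simp only [mem_coe, mem_filter, mem_powersetCard, subset_univ, true_and, hPQE, hPQE'] at this ⊢
    exact ⟨by omega, hP⟩
  · intro S _
    exact sup_inf_sdiff S E
  · rintro ⟨P, Q⟩ hPQ
    simp only [coe_product, Set.mem_prod, mem_coe, mem_powersetCard] at hPQ
    simp only [split hPQ.1.1 hPQ.2.1]

theorem sum_powersetCard_neg_one_pow_card_inter (k : ℕ) (E : Finset α) :
    ∑ S ∈ powersetCard k univ, (-1 : ℤ) ^ #(S ∩ E) = Kraw k (Fintype.card α) #E := by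
  have maps : ∀ S ∈ powersetCard k (univ : Finset α), #(S ∩ E) ∈ range (k + 1) := fun S hS =>
    mem_range_succ_iff.mpr ((card_le_card inter_subset_left).trans (mem_powersetCard.mp hS).2.le)
  rw [← sum_fiberwise_of_maps_to maps, Kraw]
  refine sum_congr rfl fun j hj => ?_
  rw [sum_congr rfl fun S hS => by rw [(mem_filter.mp hS).2], sum_const,
    card_powersetCard_filter_card_inter E (mem_range_succ_iff.mp hj)]
  ring

theorem walsh_eq_neg_one_pow (S : Finset α) (u : α → ZMod 2) :
    walsh S u = (-1) ^ #(S ∩ ({t | u t ≠ 0} : Finset α)) := by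
  simp only [walsh, sign]
  rw [prod_ite, prod_const_one, prod_const, one_mul, ← filter_mem_eq_inter]
  simp only [mem_filter, mem_univ, true_and]

theorem sum_powersetCard_walsh (k : ℕ) (w : α → ZMod 2) :
    ∑ S ∈ powersetCard k univ, walsh S w = Kraw k (Fintype.card α) (hammingNorm w) := by
  simp only [walsh_eq_neg_one_pow, sum_powersetCard_neg_one_pow_card_inter, hammingNorm]

theorem kraw_hammingDist (k : ℕ) (u v : α → ZMod 2) :
    Kraw k (Fintype.card α) (hammingDist u v)
      = ∑ S ∈ powersetCard k univ, walsh S u * walsh S v := by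
  simp only [hammingDist_eq_hammingNorm, ← sum_powersetCard_walsh, walsh_neg_add]

theorem sum_sum_kraw_hammingDist (k : ℕ) (C : Finset (α → ZMod 2)) :
    ∑ u ∈ C, ∑ v ∈ C, Kraw k (Fintype.card α) (hammingDist u v)
      = ∑ S ∈ powersetCard k (univ : Finset α), (∑ u ∈ C, walsh S u) ^ 2 := by
  simp only [kraw_hammingDist, sq, sum_mul_sum]
  exact (sum_congr rfl fun u _ => sum_comm).trans sum_comm

theorem sum_sum_kraw_hammingDist_nonneg (k : ℕ) (C : Finset (α → ZMod 2)) :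
    0 ≤ ∑ u ∈ C, ∑ v ∈ C, Kraw k (Fintype.card α) (hammingDist u v) := by
  rw [sum_sum_kraw_hammingDist]
  exact sum_nonneg fun S _ => sq_nonneg _

theorem choose_le_sum_sum_kraw_hammingDist (k : ℕ) {C : Finset (α → ZMod 2)} (hC : Odd #C) :
    ((Fintype.card α).choose k : ℤ)
      ≤ ∑ u ∈ C, ∑ v ∈ C, Kraw k (Fintype.card α) (hammingDist u v) := by
  rw [sum_sum_kraw_hammingDist, ← card_univ, ← card_powersetCard, card_eq_sum_ones, Nat.cast_sum,
    Nat.cast_one]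
  exact sum_le_sum fun S _ => one_le_sq_sum_walsh S hC

end Krawtchouk

theorem kraw_zero (k n : ℕ) : Kraw k n 0 = n.choose k := by
  simp [Kraw, sum_range_succ']

section DistanceDistribution

variable {n : ℕ}

theorem sum_mul_distDistr (C : Finset (Fin n → ZMod 2)) (f : ℕ → ℚ) :
    ∑ i ∈ range (n + 1), f i * distDistr C i
      = (∑ u ∈ C, ∑ v ∈ C, f (hammingDist u v)) / #C := by
  have maps (v) : ∀ u ∈ C, hammingDist u v ∈ range (n + 1) := fun u _ =>
    mem_range_succ_iff.mpr (hammingDist_le_card_fintype.trans (Fintype.card_fin n).le)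
  simp only [distDistr, mul_div_assoc', ← sum_div, mul_sum]
  congr 1
  rw [sum_comm]
  conv_rhs => rw [sum_comm]
  refine sum_congr rfl fun v _ => ?_
  rw [← sum_fiberwise_of_maps_to (maps v)]
  refine sum_congr rfl fun i _ => ?_
  rw [sum_congr rfl fun u hu => by rw [(mem_filter.mp hu).2], sum_const, nsmul_eq_mul, mul_comm,
    Sdist]

theorem distDistr_zero {C : Finset (Fin n → ZMod 2)} (hC : C.Nonempty) : distDistr C 0 = 1 := by
  have (c) (hc : c ∈ C) : (#(Sdist C c 0) : ℚ) = 1 := by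
    simp [Sdist, hammingDist_eq_zero, filter_eq', hc]
  rw [distDistr, sum_congr rfl this, sum_const, nsmul_one,
    div_self (by exact_mod_cast hC.card_pos.ne')]

theorem sum_Icc_kraw_mul_distDistr {C : Finset (Fin n → ZMod 2)} (hC : C.Nonempty) (k : ℕ) :
    ∑ i ∈ Icc 1 n, (Kraw k n i : ℚ) * distDistr C i
      = ((∑ u ∈ C, ∑ v ∈ C, Kraw k n (hammingDist u v) : ℤ) : ℚ) / #C - n.choose k := by
  have := sum_mul_distDistr C fun i => (Kraw k n i : ℚ)
  rw [range_eq_Ico, sum_eq_sum_Ico_succ_bot (Nat.add_one_pos n), zero_add,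
    Ico_add_one_right_eq_Icc, distDistr_zero hC, kraw_zero] at this
  push_cast at this ⊢
  linarith

end DistanceDistribution

end BinaryCode

open BinaryCode

theorem delsarte_binary_general (n : ℕ) (C : Finset (Fin n → ZMod 2)) (hC : C.Nonempty) :
    ∀ k : ℕ, k ≤ n →
      (-(n.choose k : ℚ) ≤ ∑ i ∈ Finset.Icc 1 n, (Kraw k n i : ℚ) * distDistr C i) ∧
      (Odd C.card →
        ((1 - (C.card : ℚ)) / (C.card : ℚ)) * (n.choose k : ℚ)
          ≤ ∑ i ∈ Finset.Icc 1 n, (Kraw k n i : ℚ) * distDistr C i) := by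
  intro k _
  have hM : (0 : ℚ) < #C := by exact_mod_cast hC.card_pos
  have hD := sum_sum_kraw_hammingDist_nonneg k C
  rw [Fintype.card_fin] at hD
  rw [sum_Icc_kraw_mul_distDistr hC k]
  set D : ℤ := ∑ u ∈ C, ∑ v ∈ C, Kraw k n (hammingDist u v)
  refine ⟨?_, fun hodd => ?_⟩
  · have : (0 : ℚ) ≤ D / #C := div_nonneg (by exact_mod_cast hD) hM.le
    linarith
  · have hD' := choose_le_sum_sum_kraw_hammingDist k hodd
    rw [Fintype.card_fin] at hD'
    have : (n.choose k : ℚ) / #C ≤ D / #C :=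
      div_le_div_of_nonneg_right (by exact_mod_cast hD') hM.le
    calc (1 - (#C : ℚ)) / #C * n.choose k = n.choose k / #C - n.choose k := by
          field_simp
      _ ≤ D / #C - n.choose k := by linarith

/-- Delsarte inequalities for binary codes: For a nonempty binary
code `C ⊆ F^n` of size `M` with minimum distance at least `d`, and its distance
distribution `{A_i}`, for every `k = 0,…,n` one has
`∑_{i=1}^n P_k(n;i) A_i ≥ -C(n,k)`, and if `M` is odd, then
`∑_{i=1}^n P_k(n;i) A_i ≥ ((1-M)/M) C(n,k)`. -/
theorem delsarte_binary (n d : ℕ) (C : Finset (Fin n → ZMod 2)) (hC : C.Nonempty)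
    (hdist : ∀ u ∈ C, ∀ v ∈ C, u ≠ v → d ≤ hammingDist u v) :
    ∀ k : ℕ, k ≤ n →
      (-(n.choose k : ℚ) ≤ ∑ i ∈ Finset.Icc 1 n, (Kraw k n i : ℚ) * distDistr C i) ∧
      (Odd C.card →
        ((1 - (C.card : ℚ)) / (C.card : ℚ)) * (n.choose k : ℚ)
          ≤ ∑ i ∈ Finset.Icc 1 n, (Kraw k n i : ℚ) * distDistr C i) :=
  delsarte_binary_general n C hC
end
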